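/- arXiv:2504.07746 — 3 statements merged into one kernel-verified Lean document; each statement's English description precedes it below -/
import Mathlib

section
/- Let T : X → X be measurable and let μ be a (possibly non-invariant) probability measure on X, and let 𝒬 be a finite partition. For any N ∈ ℕ and n > N, one has (1/n) H_μ(𝒬^n) ≤ (1/N) H_{(1/n)Σ_{i=0}^{n−1} T_*^i μ}(𝒬^N) + (2N/n) log #𝒬, where 𝒬^n = ⋁_{j=0}^{n−1} T^{−j}𝒬. -/
open MeasureTheory Real
open scoped ENNReal

/-- Static entropy of the iterated join `𝒬^m = ⋁_{j=0}^{m−1} T^{−j}𝒬` of a finite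
partition, the partition being encoded by a map `P : X → ι` assigning to each
point its atom: the atoms of `𝒬^m` are the sets `{x | ∀ j < m, P(T^j x) = c j}`. -/
noncomputable def joinEntropy {X ι : Type*} [MeasurableSpace X] [Fintype ι]
    [DecidableEq ι] (T : X → X) (P : X → ι) (ν : Measure X) (m : ℕ) : ℝ :=
  ∑ c : Fin m → ι, negMulLog (ν {x | ∀ j : Fin m, P (T^[(j : ℕ)] x) = c j}).toReal

set_option linter.unusedSectionVars false

section Hf
variable {X : Type*} [MeasurableSpace X]

/-- entropy of the partition induced by a map into a fintype -/
noncomputable def Hf {α : Type*} [Fintype α] (ν : Measure X) (f : X → α) : ℝ :=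
  ∑ a : α, negMulLog (ν (f ⁻¹' {a})).toReal

variable {α β : Type*} [Fintype α] [Fintype β]
variable (ν : Measure X) [IsProbabilityMeasure ν]

lemma Hf_nonneg (f : X → α) : 0 ≤ Hf ν f := by
  refine Finset.sum_nonneg fun a _ => negMulLog_nonneg (ENNReal.toReal_nonneg) ?_
  calc (ν (f ⁻¹' {a})).toReal ≤ (1:ℝ≥0∞).toReal := ENNReal.toReal_mono ENNReal.one_ne_top prob_le_one
    _ = 1 := by simp

lemma sum_p_eq_one (f : X → α) (hf : ∀ a, MeasurableSet (f ⁻¹' {a})) :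
    ∑ a : α, (ν (f ⁻¹' {a})).toReal = 1 := by
  have h1 : (Set.univ : Set X) = ⋃ a ∈ (Finset.univ : Finset α), f ⁻¹' {a} := by
    ext x; simp
  have h2 : ν Set.univ = ∑ a : α, ν (f ⁻¹' {a}) := by
    rw [h1, measure_biUnion_finset ?_ (fun a _ => hf a)]
    intro a _ b _ hab
    exact Set.disjoint_left.mpr (fun x hx hx' => hab (hx.symm.trans hx'))
  have := congrArg ENNReal.toReal h2
  rw [measure_univ, ENNReal.toReal_one, ENNReal.toReal_sum (fun a _ => measure_ne_top ν _)] at this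
  exact this.symm

lemma Hf_le_log_card (f : X → α) (hf : ∀ a, MeasurableSet (f ⁻¹' {a})) :
    Hf ν f ≤ Real.log (Fintype.card α) := by
  rcases Nat.eq_zero_or_pos (Fintype.card α) with h0 | hpos
  · have : IsEmpty α := Fintype.card_eq_zero_iff.mp h0
    simp [Hf, h0]
  have hC : (0:ℝ) < (Fintype.card α : ℝ) := by exact_mod_cast hpos
  have jensen := Real.concaveOn_negMulLog.le_map_sum
    (t := Finset.univ) (w := fun _ : α => 1 / (Fintype.card α : ℝ))
    (p := fun a => (ν (f ⁻¹' {a})).toReal)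
    (fun a _ => by positivity)
    (by simp [Finset.card_univ]; field_simp)
    (fun a _ => ENNReal.toReal_nonneg)
  have hsum : ∑ a : α, (1 / (Fintype.card α : ℝ)) • (ν (f ⁻¹' {a})).toReal
      = 1 / (Fintype.card α : ℝ) := by
    simp only [smul_eq_mul, ← Finset.mul_sum, sum_p_eq_one ν f hf, mul_one]
  rw [hsum] at jensen
  have hval : negMulLog (1 / (Fintype.card α : ℝ))
      = (1 / (Fintype.card α : ℝ)) * Real.log (Fintype.card α) := by
    rw [negMulLog, Real.log_div one_ne_zero (ne_of_gt hC), Real.log_one]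
    ring
  rw [hval] at jensen
  have h2 := mul_le_mul_of_nonneg_left jensen (le_of_lt hC)
  calc Hf ν f = (Fintype.card α : ℝ)
        * ∑ a : α, (1 / (Fintype.card α : ℝ)) • negMulLog (ν (f ⁻¹' {a})).toReal := by
        rw [Finset.mul_sum]
        refine Finset.sum_congr rfl fun a _ => ?_
        rw [smul_eq_mul]; field_simp
    _ ≤ (Fintype.card α : ℝ) * (1 / (Fintype.card α : ℝ) * Real.log (Fintype.card α)) := h2
    _ = Real.log (Fintype.card α) := by field_simp

lemma measure_toReal_eq_sum_inter (s : Set X) (hs : MeasurableSet s)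
    (g : X → β) (hg : ∀ b, MeasurableSet (g ⁻¹' {b})) :
    (ν s).toReal = ∑ b : β, (ν (s ∩ g ⁻¹' {b})).toReal := by
  have h1 : s = ⋃ b ∈ (Finset.univ : Finset β), s ∩ g ⁻¹' {b} := by
    ext x; simp
  have h2 : ν s = ∑ b : β, ν (s ∩ g ⁻¹' {b}) := by
    conv_lhs => rw [h1]
    rw [measure_biUnion_finset ?_ (fun b _ => hs.inter (hg b))]
    intro a _ b _ hab
    exact Set.disjoint_left.mpr (fun x hx hx' => hab (hx.2.symm.trans hx'.2))
  rw [h2, ENNReal.toReal_sum (fun b _ => measure_ne_top ν _)]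

lemma Hf_pair_le (f : X → α) (g : X → β)
    (hf : ∀ a, MeasurableSet (f ⁻¹' {a})) (hg : ∀ b, MeasurableSet (g ⁻¹' {b})) :
    Hf ν (fun x => (f x, g x)) ≤ Hf ν f + Hf ν g := by
  classical
  set p : α → β → ℝ := fun a b => (ν (f ⁻¹' {a} ∩ g ⁻¹' {b})).toReal with hpdef
  set pa : α → ℝ := fun a => (ν (f ⁻¹' {a})).toReal with hpadef
  set qb : β → ℝ := fun b => (ν (g ⁻¹' {b})).toReal with hqdef
  have marg1 : ∀ a, ∑ b : β, p a b = pa a := fun a =>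
    (measure_toReal_eq_sum_inter ν _ (hf a) g hg).symm
  have marg2 : ∀ b, ∑ a : α, p a b = qb b := by
    intro b
    simp only [hpdef, hqdef]
    rw [measure_toReal_eq_sum_inter ν _ (hg b) f hf]
    exact Finset.sum_congr rfl fun a _ => by rw [Set.inter_comm]
  have p_nonneg : ∀ a b, 0 ≤ p a b := fun a b => ENNReal.toReal_nonneg
  have p_le_pa : ∀ a b, p a b ≤ pa a := fun a b =>
    ENNReal.toReal_mono (measure_ne_top ν _) (measure_mono Set.inter_subset_left)
  set r : α → β → ℝ := fun a b => if pa a = 0 then qb b else p a b / pa a with hrdef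
  have hr0 : ∀ a b, 0 ≤ r a b := by
    intro a b; rw [hrdef]; dsimp only
    split
    · exact ENNReal.toReal_nonneg
    · exact div_nonneg (p_nonneg a b) ENNReal.toReal_nonneg
  have hsum_par : ∀ b, ∑ a : α, pa a * r a b = qb b := by
    intro b; rw [← marg2 b]
    refine Finset.sum_congr rfl fun a _ => ?_
    by_cases h : pa a = 0
    · have hz : p a b = 0 := le_antisymm (h ▸ p_le_pa a b) (p_nonneg a b)
      rw [h, hz, zero_mul]
    · rw [hrdef]; dsimp only; rw [if_neg h]; field_simp
  have sum_pa : ∑ a : α, pa a = 1 := sum_p_eq_one ν f hf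
  have step1 : ∀ b, ∑ a : α, pa a * negMulLog (r a b) ≤ negMulLog (qb b) := by
    intro b
    have := Real.concaveOn_negMulLog.le_map_sum (t := Finset.univ) (w := pa)
      (p := fun a => r a b) (fun a _ => ENNReal.toReal_nonneg) sum_pa
      (fun a _ => hr0 a b)
    simpa [smul_eq_mul, hsum_par b] using this
  have step2 : ∀ a, ∑ b : β, negMulLog (p a b)
      = negMulLog (pa a) + pa a * ∑ b : β, negMulLog (r a b) := by
    intro a
    by_cases h : pa a = 0
    · have hz : ∀ b, p a b = 0 := fun b => le_antisymm (h ▸ p_le_pa a b) (p_nonneg a b)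
      simp [hz, h]
    · have hpa : ∀ b, p a b = pa a * r a b := by
        intro b; rw [hrdef]; dsimp only; rw [if_neg h]; field_simp
      have hrsum : ∑ b : β, r a b = 1 := by
        have : ∑ b : β, r a b = (∑ b : β, p a b) / pa a := by
          rw [Finset.sum_div]
          exact Finset.sum_congr rfl fun b _ => by rw [hrdef]; dsimp only; rw [if_neg h]
        rw [this, marg1 a, div_self h]
      calc ∑ b : β, negMulLog (p a b)
          = ∑ b : β, (r a b * negMulLog (pa a) + pa a * negMulLog (r a b)) := by
            refine Finset.sum_congr rfl fun b _ => ?_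
            rw [hpa b, negMulLog_mul]
        _ = (∑ b : β, r a b) * negMulLog (pa a)
            + pa a * ∑ b : β, negMulLog (r a b) := by
            rw [Finset.sum_add_distrib, ← Finset.sum_mul, ← Finset.mul_sum]
        _ = negMulLog (pa a) + pa a * ∑ b : β, negMulLog (r a b) := by
            rw [hrsum, one_mul]
  have hjoint : Hf ν (fun x => (f x, g x)) = ∑ a : α, ∑ b : β, negMulLog (p a b) := by
    unfold Hf
    rw [Fintype.sum_prod_type]
    refine Finset.sum_congr rfl fun a _ => Finset.sum_congr rfl fun b _ => ?_
    have hpre : (fun x => (f x, g x)) ⁻¹' {(a, b)} = f ⁻¹' {a} ∩ g ⁻¹' {b} := by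
      ext x; simp [Prod.ext_iff]
    rw [hpdef]; dsimp only; rw [hpre]
  rw [hjoint]
  calc ∑ a : α, ∑ b : β, negMulLog (p a b)
      = Hf ν f + ∑ a : α, pa a * ∑ b : β, negMulLog (r a b) := by
        simp only [step2]; rw [Finset.sum_add_distrib]; rfl
    _ = Hf ν f + ∑ b : β, ∑ a : α, pa a * negMulLog (r a b) := by
        congr 1
        rw [Finset.sum_comm]
        exact Finset.sum_congr rfl fun a _ => Finset.mul_sum _ _ _
    _ ≤ Hf ν f + ∑ b : β, negMulLog (qb b) := by
        exact add_le_add_right (Finset.sum_le_sum fun b _ => step1 b) _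
    _ = Hf ν f + Hf ν g := rfl
end Hf

section Join
variable {X ι : Type*} [MeasurableSpace X] [Fintype ι] [DecidableEq ι]
  [MeasurableSpace ι] [MeasurableSingletonClass ι]
  (T : X → X) (P : X → ι)

/-- the map sending a point to its itinerary of length m -/
def itMap (m : ℕ) : X → (Fin m → ι) := fun x j => P (T^[(j : ℕ)] x)

lemma joinEntropy_eq_Hf (ν : Measure X) (m : ℕ) :
    joinEntropy T P ν m = Hf ν (itMap T P m) := by
  unfold joinEntropy Hf
  refine Finset.sum_congr rfl fun c _ => ?_
  have h : {x | ∀ j : Fin m, P (T^[(j : ℕ)] x) = c j} = itMap T P m ⁻¹' {c} := by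
    ext x; simp [itMap, funext_iff]
  rw [h]

variable (hT : Measurable T) (hP : Measurable P)
include hT hP

lemma itMap_meas (m : ℕ) (c : Fin m → ι) : MeasurableSet (itMap T P m ⁻¹' {c}) := by
  have h : itMap T P m ⁻¹' {c} = ⋂ j : Fin m, (fun x => P (T^[(j : ℕ)] x)) ⁻¹' {c j} := by
    ext x; simp [itMap, funext_iff]
  rw [h]
  exact MeasurableSet.iInter fun j => (hP.comp (hT.iterate _)) (measurableSet_singleton _)

lemma join_add_le (ν : Measure X) [IsProbabilityMeasure ν] (a b : ℕ) :
    joinEntropy T P ν (a + b)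
      ≤ joinEntropy T P ν a + joinEntropy T P (Measure.map T^[a] ν) b := by
  haveI : IsProbabilityMeasure (Measure.map T^[a] ν) :=
    Measure.isProbabilityMeasure_map (hT.iterate a).aemeasurable
  set e : (Fin (a + b) → ι) ≃ (Fin a → ι) × (Fin b → ι) :=
    (Equiv.arrowCongr finSumFinEquiv.symm (Equiv.refl ι)).trans
      (Equiv.sumArrowEquivProdArrow _ _ _) with hedef
  have key : (fun x => e (itMap T P (a + b) x))
      = fun x => (itMap T P a x, itMap T P b (T^[a] x)) := by
    funext x
    refine Prod.ext ?_ ?_ <;> funext j <;>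
      simp [hedef, Equiv.sumArrowEquivProdArrow, Equiv.arrowCongr, itMap,
        Function.iterate_add_apply, add_comm a (j : ℕ)]
  have h1 : joinEntropy T P ν (a + b) = Hf ν (fun x => e (itMap T P (a + b) x)) := by
    rw [joinEntropy_eq_Hf]
    unfold Hf
    rw [← Equiv.sum_comp e]
    refine Finset.sum_congr rfl fun c _ => ?_
    have hpre : (fun x => e (itMap T P (a + b) x)) ⁻¹' {e c} = itMap T P (a + b) ⁻¹' {c} := by
      ext x; simp
    rw [hpre]
  rw [h1, key]
  have h2 := Hf_pair_le ν (itMap T P a) (fun x => itMap T P b (T^[a] x))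
    (itMap_meas T P hT hP a) (fun c => (hT.iterate a) (itMap_meas T P hT hP b c))
  have h3 : Hf ν (fun x => itMap T P b (T^[a] x))
      = Hf (Measure.map T^[a] ν) (itMap T P b) := by
    unfold Hf
    refine Finset.sum_congr rfl fun c _ => ?_
    rw [Measure.map_apply (hT.iterate a) (itMap_meas T P hT hP b c)]
    rfl
  rw [h3] at h2
  calc Hf ν (fun x => (itMap T P a x, itMap T P b (T^[a] x)))
      ≤ Hf ν (itMap T P a) + Hf (Measure.map T^[a] ν) (itMap T P b) := h2
    _ = joinEntropy T P ν a + joinEntropy T P (Measure.map T^[a] ν) b := by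
        rw [joinEntropy_eq_Hf, joinEntropy_eq_Hf]


lemma join_avg (μ : Measure X) [IsProbabilityMeasure μ] (n N : ℕ) (hn : 0 < n) :
    ∑ i ∈ Finset.range n, joinEntropy T P (Measure.map T^[i] μ) N
      ≤ n * joinEntropy T P
          (((n : ℝ≥0∞))⁻¹ • ∑ i ∈ Finset.range n, Measure.map T^[i] μ) N := by
  haveI : ∀ i : ℕ, IsProbabilityMeasure (Measure.map T^[i] μ) := fun i =>
    Measure.isProbabilityMeasure_map (hT.iterate i).aemeasurable
  have hn0 : ((n : ℝ)) ≠ 0 := by positivity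
  unfold joinEntropy
  rw [Finset.sum_comm, Finset.mul_sum]
  refine Finset.sum_le_sum fun c _ => ?_
  set A := {x | ∀ j : Fin N, P (T^[(j : ℕ)] x) = c j} with hA
  have havg : ∑ i ∈ Finset.range n, (1 / (n : ℝ)) • ((Measure.map T^[i] μ) A).toReal
      = ((((n : ℝ≥0∞))⁻¹ • ∑ i ∈ Finset.range n, Measure.map T^[i] μ) A).toReal := by
    rw [Measure.smul_apply, Measure.coe_finset_sum, smul_eq_mul, ENNReal.toReal_mul,
      Finset.sum_apply, ENNReal.toReal_sum (fun i _ => measure_ne_top _ _),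
      ENNReal.toReal_inv, ENNReal.toReal_natCast, Finset.mul_sum]
    refine Finset.sum_congr rfl fun i _ => ?_
    rw [smul_eq_mul, one_div]
  have hwsum : ∑ _i ∈ Finset.range n, (1 / (n : ℝ)) = 1 := by
    rw [Finset.sum_const, Finset.card_range, nsmul_eq_mul]
    field_simp
  have jensen := Real.concaveOn_negMulLog.le_map_sum (t := Finset.range n)
    (w := fun _ => 1 / (n : ℝ)) (p := fun i => ((Measure.map T^[i] μ) A).toReal)
    (fun i _ => by positivity) hwsum (fun i _ => ENNReal.toReal_nonneg)
  rw [havg] at jensen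
  have h2 := mul_le_mul_of_nonneg_left jensen (by positivity : (0:ℝ) ≤ (n : ℝ))
  calc ∑ i ∈ Finset.range n, negMulLog ((Measure.map T^[i] μ) A).toReal
      = (n : ℝ) * ∑ i ∈ Finset.range n,
          (1 / (n : ℝ)) • negMulLog ((Measure.map T^[i] μ) A).toReal := by
        rw [Finset.mul_sum]
        refine Finset.sum_congr rfl fun i _ => ?_
        rw [smul_eq_mul]; field_simp
    _ ≤ (n : ℝ) * negMulLog
        ((((n : ℝ≥0∞))⁻¹ • ∑ i ∈ Finset.range n, Measure.map T^[i] μ) A).toReal := h2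

end Join

/-- Concavity estimate for entropy of joins: for a (possibly non-invariant)
probability measure `μ` and a finite partition `𝒬` (with `#𝒬 = card ι`), for all
`0 < N < n`,
`(1/n) H_μ(𝒬^n) ≤ (1/N) H_{(1/n) Σ_{i<n} T_*^i μ}(𝒬^N) + (2N/n) log #𝒬`. -/
theorem entropy_join_concavity_bound
    {X ι : Type*} [MeasurableSpace X] [Fintype ι] [DecidableEq ι]
    [MeasurableSpace ι] [MeasurableSingletonClass ι]
    (T : X → X) (hT : Measurable T) (P : X → ι) (hP : Measurable P)
    (μ : Measure X) [IsProbabilityMeasure μ] :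
    ∀ N n : ℕ, 0 < N → N < n →
      (1 / (n : ℝ)) * joinEntropy T P μ n
        ≤ (1 / (N : ℝ)) * joinEntropy T P
            (((n : ℝ≥0∞))⁻¹ • ∑ i ∈ Finset.range n, Measure.map T^[i] μ) N
          + (2 * (N : ℝ) / (n : ℝ)) * Real.log (Fintype.card ι) := by
  intro N n hN hNn
  haveI hprob : ∀ i : ℕ, IsProbabilityMeasure (Measure.map T^[i] μ) := fun i =>
    Measure.isProbabilityMeasure_map (hT.iterate i).aemeasurable
  set J : ℕ → ℕ → ℝ := fun i m => joinEntropy T P (Measure.map T^[i] μ) m with hJ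
  set B : ℝ := joinEntropy T P
      (((n : ℝ≥0∞))⁻¹ • ∑ i ∈ Finset.range n, Measure.map T^[i] μ) N with hB
  have hn : 0 < n := hN.trans hNn
  have hXne : Nonempty X := by
    by_contra h
    have h0 : μ Set.univ = 0 := by
      rw [Set.univ_eq_empty_iff.mpr (not_nonempty_iff.mp h)]; simp
    rw [measure_univ] at h0
    exact one_ne_zero h0
  have hιne : Nonempty ι := ⟨P (Classical.arbitrary X)⟩
  have hcard : 1 ≤ (Fintype.card ι : ℝ) := by exact_mod_cast Fintype.card_pos
  set L : ℝ := Real.log (Fintype.card ι) with hL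
  have hL0 : 0 ≤ L := Real.log_nonneg hcard
  have hJ0 : joinEntropy T P μ n = J 0 n := by
    rw [hJ]; simp
  have hJnn : ∀ i m, 0 ≤ J i m := fun i m => by
    rw [hJ]; dsimp only; rw [joinEntropy_eq_Hf]; exact Hf_nonneg _ _
  have hJle : ∀ i m, J i m ≤ m * L := by
    intro i m
    rw [hJ]; dsimp only; rw [joinEntropy_eq_Hf]
    calc Hf (Measure.map T^[i] μ) (itMap T P m)
        ≤ Real.log (Fintype.card (Fin m → ι)) :=
          Hf_le_log_card _ _ (itMap_meas T P hT hP m)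
      _ = m * L := by
        have hc : Fintype.card (Fin m → ι) = Fintype.card ι ^ m := by
          simp [Fintype.card_fun]
        rw [hL, hc, Nat.cast_pow, Real.log_pow]
  have hD : ∀ i a b, J i (a + b) ≤ J i a + J (i + a) b := by
    intro i a b
    have h := join_add_le T P hT hP (Measure.map T^[i] μ) a b
    have hm : Measure.map T^[a] (Measure.map T^[i] μ) = Measure.map T^[i + a] μ := by
      rw [Measure.map_map (hT.iterate a) (hT.iterate i), ← Function.iterate_add,
        add_comm a i]
    rw [hm] at h
    exact h
  have hG : ∀ k i m, J i (k * N + m)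
      ≤ (∑ t ∈ Finset.range k, J (i + t * N) N) + J (i + k * N) m := by
    intro k
    induction k with
    | zero => intro i m; simp
    | succ k ih =>
      intro i m
      have e1 : (k + 1) * N + m = N + (k * N + m) := by ring
      rw [e1]
      calc J i (N + (k * N + m)) ≤ J i N + J (i + N) (k * N + m) := hD i N _
        _ ≤ J i N + ((∑ t ∈ Finset.range k, J (i + N + t * N) N)
              + J (i + N + k * N) m) := add_le_add_right (ih (i + N) m) _
        _ = (∑ t ∈ Finset.range (k + 1), J (i + t * N) N) + J (i + (k + 1) * N) m := by
            rw [Finset.sum_range_succ']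
            simp only [show ∀ t, i + (t + 1) * N = i + N + t * N from fun t => by ring,
              show i + 0 * N = i from by ring,
              show i + (k + 1) * N = i + N + k * N from by ring]
            ring
  have hstep : ∀ r ∈ Finset.range N,
      J 0 n ≤ (∑ t ∈ Finset.range ((n - r) / N), J (r + t * N) N) + 2 * ((N : ℝ) * L) := by
    intro r hr
    have hrN : r < N := Finset.mem_range.mp hr
    have hrn : r ≤ n := le_of_lt (hrN.trans hNn)
    have hdecomp : n = r + (((n - r) / N) * N + (n - r) % N) := by
      have := Nat.div_add_mod' (n - r) N
      omega
    calc J 0 n = J 0 (r + (((n - r) / N) * N + (n - r) % N)) := by rw [← hdecomp]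
      _ ≤ J 0 r + J (0 + r) (((n - r) / N) * N + (n - r) % N) := hD 0 r _
      _ ≤ J 0 r + ((∑ t ∈ Finset.range ((n - r) / N), J (0 + r + t * N) N)
            + J (0 + r + ((n - r) / N) * N) ((n - r) % N)) :=
          add_le_add_right (hG _ _ _) _
      _ ≤ (N : ℝ) * L + ((∑ t ∈ Finset.range ((n - r) / N), J (r + t * N) N)
            + (N : ℝ) * L) := by
          simp only [zero_add]
          refine add_le_add ?_ (add_le_add_right ?_ _)
          · calc J 0 r ≤ (r : ℝ) * L := hJle 0 r
              _ ≤ (N : ℝ) * L := by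
                apply mul_le_mul_of_nonneg_right _ hL0
                exact_mod_cast hrN.le
          · calc J (r + ((n - r) / N) * N) ((n - r) % N)
                ≤ (((n - r) % N : ℕ) : ℝ) * L := hJle _ _
              _ ≤ (N : ℝ) * L := by
                apply mul_le_mul_of_nonneg_right _ hL0
                exact_mod_cast (Nat.mod_lt _ hN).le
      _ = (∑ t ∈ Finset.range ((n - r) / N), J (r + t * N) N) + 2 * ((N : ℝ) * L) := by
          ring
  have hsum : (N : ℝ) * J 0 n
      ≤ (∑ r ∈ Finset.range N, ∑ t ∈ Finset.range ((n - r) / N), J (r + t * N) N)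
        + (N : ℝ) * (2 * ((N : ℝ) * L)) := by
    have h := Finset.sum_le_sum hstep
    rw [Finset.sum_const, Finset.card_range, nsmul_eq_mul] at h
    rw [Finset.sum_add_distrib, Finset.sum_const, Finset.card_range, nsmul_eq_mul] at h
    exact h
  have hdouble : (∑ r ∈ Finset.range N, ∑ t ∈ Finset.range ((n - r) / N), J (r + t * N) N)
      ≤ ∑ i ∈ Finset.range n, J i N := by
    rw [Finset.sum_sigma']
    set S := (Finset.range N).sigma (fun r => Finset.range ((n - r) / N)) with hS
    have hinj : ∀ x ∈ S, ∀ y ∈ S,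
        (fun z : Σ _ : ℕ, ℕ => z.1 + z.2 * N) x = (fun z : Σ _ : ℕ, ℕ => z.1 + z.2 * N) y
          → x = y := by
      rintro ⟨r, t⟩ hx ⟨r', t'⟩ hy h
      simp only [hS, Finset.mem_sigma, Finset.mem_range] at hx hy
      simp only at h
      have e1 : (r + t * N) % N = r := by
        rw [Nat.add_mul_mod_self_right]; exact Nat.mod_eq_of_lt hx.1
      have e2 : (r' + t' * N) % N = r' := by
        rw [Nat.add_mul_mod_self_right]; exact Nat.mod_eq_of_lt hy.1
      have hr : r = r' := by rw [← e1, ← e2, h]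
      subst hr
      have ht : t = t' := by
        have : t * N = t' * N := by omega
        exact Nat.eq_of_mul_eq_mul_right hN this
      subst ht
      rfl
    have hsub : S.image (fun z : Σ _ : ℕ, ℕ => z.1 + z.2 * N) ⊆ Finset.range n := by
      intro i hi
      simp only [Finset.mem_image, hS, Finset.mem_sigma, Finset.mem_range] at hi
      obtain ⟨⟨r, t⟩, ⟨hr, ht⟩, rfl⟩ := hi
      simp only [Finset.mem_range]
      have hrn : r ≤ n := le_of_lt (hr.trans hNn)
      have h1 : (t + 1) * N ≤ n - r := (Nat.le_div_iff_mul_le hN).mp ht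
      have h2 : t * N + N ≤ n - r := by rw [add_mul, one_mul] at h1; exact h1
      have h3 : r + (t * N + N) ≤ n := by
        have := Nat.add_le_add_left h2 r
        rwa [Nat.add_sub_cancel' hrn] at this
      exact lt_of_lt_of_le (Nat.add_lt_add_left (Nat.lt_add_of_pos_right hN) r) h3
    calc ∑ x ∈ S, J (x.1 + x.2 * N) N
        = ∑ i ∈ S.image (fun z : Σ _ : ℕ, ℕ => z.1 + z.2 * N), J i N :=
          (Finset.sum_image (f := fun i => J i N) hinj).symm
      _ ≤ ∑ i ∈ Finset.range n, J i N :=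
          Finset.sum_le_sum_of_subset_of_nonneg hsub (fun i _ _ => hJnn i N)
  have havg : ∑ i ∈ Finset.range n, J i N ≤ (n : ℝ) * B :=
    join_avg T P hT hP μ n N hn
  have key : (N : ℝ) * J 0 n ≤ (n : ℝ) * B + (N : ℝ) * (2 * ((N : ℝ) * L)) := by
    linarith
  have hn' : (0 : ℝ) < n := by exact_mod_cast hn
  have hN' : (0 : ℝ) < N := by exact_mod_cast hN
  clear hJ hB hL
  clear_value J B L
  rw [hJ0]
  have h1 : (1 / (n : ℝ)) * J 0 n = ((N : ℝ) * J 0 n) / ((N : ℝ) * (n : ℝ)) := by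
    field_simp
  have h2 : (1 / (N : ℝ)) * B + (2 * (N : ℝ) / (n : ℝ)) * L
      = ((n : ℝ) * B + (N : ℝ) * (2 * ((N : ℝ) * L))) / ((N : ℝ) * (n : ℝ)) := by
    field_simp
  rw [h1, h2]
  exact div_le_div_of_nonneg_right key (mul_pos hN' hn').le
end

section
/- Fix r ∈ ℕ and α ∈ (0,1]. There exists a constant C > 0 (depending only on r and α) such that for every C^{r,α} function φ : [−1,1] → ℝᵐ and every k with 0 ≤ k ≤ r, one has ‖D^k φ‖₀ ≤ C (‖φ‖₀ + ‖D^r φ‖_α), where ‖·‖₀ denotes the sup norm and ‖D^rφ‖_α the α-Hölder seminorm of the r-th derivative (Kolmogorov–Landau type inequality on a compact interval). -/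
open Set

private lemma clm_comp_iteratedDerivWithin {E : Type} [NormedAddCommGroup E]
    [NormedSpace ℝ E] (ℓ : E →L[ℝ] ℝ) {f : ℝ → E} {n : ℕ}
    (hf : ContDiffOn ℝ n f (Icc (-1:ℝ) 1)) {x : ℝ} (hx : x ∈ Icc (-1:ℝ) 1)
    {i : ℕ} (hi : i ≤ n) :
    iteratedDerivWithin i (fun t => ℓ (f t)) (Icc (-1:ℝ) 1) x
      = ℓ (iteratedDerivWithin i f (Icc (-1:ℝ) 1) x) := by
  have := ℓ.iteratedFDerivWithin_comp_left (hf x hx) (uniqueDiffOn_Icc (by norm_num : (-1:ℝ) < 1))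
    hx (i := i) (by exact_mod_cast hi)
  rw [iteratedDerivWithin_eq_iteratedFDerivWithin, iteratedDerivWithin_eq_iteratedFDerivWithin]
  show (iteratedFDerivWithin ℝ i (ℓ ∘ f) (Icc (-1:ℝ) 1) x) (fun _ => 1) = _
  rw [this]; rfl

/-- There is a point in `[a,b] ⊆ [-1,1]` where the `k`-th derivative of a scalar
function is controlled by its sup norm. -/
private lemma scalar_point (k : ℕ) :
    ∃ c : ℝ, 0 < c ∧ ∀ g : ℝ → ℝ, ContDiffOn ℝ k g (Icc (-1:ℝ) 1) →
      ∀ a b : ℝ, -1 ≤ a → b ≤ 1 → a < b → ∀ M : ℝ,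
      (∀ x ∈ Icc a b, |g x| ≤ M) →
      ∃ ξ ∈ Icc a b, |iteratedDerivWithin k g (Icc (-1:ℝ) 1) ξ| ≤ c / (b - a) ^ k * M := by
  induction k with
  | zero =>
    refine ⟨1, one_pos, fun g _ a b _ _ hab M hM => ⟨a, ?_, ?_⟩⟩
    · exact ⟨le_rfl, hab.le⟩
    · simpa using hM a ⟨le_rfl, hab.le⟩
  | succ k ih =>
    obtain ⟨c, hc, H⟩ := ih
    refine ⟨2 * 3 ^ (k+1) * c, by positivity, fun g hg a b ha hb hab M hM => ?_⟩
    set S := Icc (-1:ℝ) 1 with hS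
    have hS' : UniqueDiffOn ℝ S := uniqueDiffOn_Icc (by norm_num)
    set h := (b - a) / 3 with hh_def
    have hh : 0 < h := by rw [hh_def]; linarith
    have hM0 : 0 ≤ M := le_trans (abs_nonneg _) (hM a ⟨le_rfl, hab.le⟩)
    have hg' : ContDiffOn ℝ k g S := hg.of_le (by exact_mod_cast Nat.le_succ k)
    obtain ⟨ξ₁, hξ₁, hb1⟩ := H g hg' a (a + h) ha (by linarith) (by linarith) M
      (fun x hx => hM x ⟨hx.1, by linarith [hx.2]⟩)
    obtain ⟨ξ₂, hξ₂, hb2⟩ := H g hg' (b - h) b (by linarith) hb (by linarith) M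
      (fun x hx => hM x ⟨by linarith [hx.1], hx.2⟩)
    have hlen1 : a + h - a = h := by ring
    have hlen2 : b - (b - h) = h := by ring
    rw [hlen1] at hb1
    rw [hlen2] at hb2
    have hgap : ξ₁ + h ≤ ξ₂ := by
      have := hξ₁.2; have := hξ₂.1
      have : a + 2 * h ≤ b - h := by rw [hh_def]; linarith
      linarith [hξ₁.2, hξ₂.1]
    have hlt : ξ₁ < ξ₂ := by linarith
    set f := iteratedDerivWithin k g S with hf_def
    set f' := iteratedDerivWithin (k+1) g S with hf'_def
    have hdiff : DifferentiableOn ℝ f S :=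
      hg.differentiableOn_iteratedDerivWithin (by exact_mod_cast Nat.lt_succ_self k) hS'
    have hsub : Icc ξ₁ ξ₂ ⊆ S := by
      intro x hx
      exact ⟨le_trans (le_trans ha hξ₁.1) hx.1, le_trans hx.2 (le_trans hξ₂.2 hb)⟩
    have hcont : ContinuousOn f (Icc ξ₁ ξ₂) := hdiff.continuousOn.mono hsub
    have hderiv : ∀ x ∈ Ioo ξ₁ ξ₂, HasDerivAt f (f' x) x := by
      intro x hx
      have hxS : x ∈ S := hsub ⟨hx.1.le, hx.2.le⟩
      have hnhds : S ∈ nhds x := by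
        refine Filter.mem_of_superset (isOpen_Ioo.mem_nhds ?_) Ioo_subset_Icc_self
        exact ⟨lt_of_le_of_lt (le_trans ha hξ₁.1) hx.1, lt_of_lt_of_le hx.2 (le_trans hξ₂.2 hb)⟩
      have hd : DifferentiableAt ℝ f x := (hdiff x hxS).differentiableAt hnhds
      have : deriv f x = f' x := by
        rw [← derivWithin_of_mem_nhds hnhds, hf'_def, iteratedDerivWithin_succ]
      rw [← this]
      exact hd.hasDerivAt
    obtain ⟨ξ, hξ, heq⟩ := exists_hasDerivAt_eq_slope f f' hlt hcont hderiv
    refine ⟨ξ, ⟨le_trans hξ₁.1 hξ.1.le, le_trans hξ.2.le hξ₂.2⟩, ?_⟩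
    rw [heq]
    have hnum : |f ξ₂ - f ξ₁| ≤ 2 * (c / h ^ k * M) := by
      calc |f ξ₂ - f ξ₁| ≤ |f ξ₂| + |f ξ₁| := abs_sub _ _
        _ ≤ c / h ^ k * M + (c / h ^ k * M) := add_le_add hb2 hb1
        _ = 2 * (c / h ^ k * M) := by ring
    have hden : (0:ℝ) < ξ₂ - ξ₁ := by linarith
    have : |(f ξ₂ - f ξ₁) / (ξ₂ - ξ₁)| ≤ 2 * (c / h ^ k * M) / h := by
      rw [abs_div, abs_of_pos hden]
      exact div_le_div₀ (by positivity) hnum hh (by linarith)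
    refine le_trans this (le_of_eq ?_)
    have hba : (0:ℝ) < b - a := by linarith
    rw [hh_def, div_pow]
    field_simp
    ring

set_option maxHeartbeats 1000000 in
/-- Kolmogorov–Landau type inequality on a compact interval: for fixed `r ∈ ℕ`
and `α ∈ (0,1]` there is a constant `C > 0` (depending only on `r` and `α`) such
that for every `C^{r,α}` function `φ : [−1,1] → E` and every `0 ≤ k ≤ r`,
`‖D^k φ‖₀ ≤ C (‖φ‖₀ + ‖D^r φ‖_α)`. -/
theorem kolmogorov_landau_holder
    (r : ℕ) (α : ℝ) (hα0 : 0 < α) (hα1 : α ≤ 1) :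
    ∃ C : ℝ, 0 < C ∧
      ∀ (E : Type) (_ : NormedAddCommGroup E) (_ : NormedSpace ℝ E),
      ∀ (φ : ℝ → E), ContDiffOn ℝ r φ (Icc (-1 : ℝ) 1) →
      ∀ (M Cα : ℝ),
        (∀ x ∈ Icc (-1 : ℝ) 1, ‖φ x‖ ≤ M) →
        (∀ x ∈ Icc (-1 : ℝ) 1, ∀ y ∈ Icc (-1 : ℝ) 1,
          ‖iteratedDerivWithin r φ (Icc (-1 : ℝ) 1) x
            - iteratedDerivWithin r φ (Icc (-1 : ℝ) 1) y‖ ≤ Cα * |x - y| ^ α) →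
        ∀ k ≤ r, ∀ x ∈ Icc (-1 : ℝ) 1,
          ‖iteratedDerivWithin k φ (Icc (-1 : ℝ) 1) x‖ ≤ C * (M + Cα) := by
  choose c hcpos hc using scalar_point
  set cmax : ℝ := ∑ k ∈ Finset.range (r + 1), c k with hcmax_def
  have hcmax_pos : 0 < cmax :=
    Finset.sum_pos (fun i _ => hcpos i) ⟨0, Finset.mem_range.mpr (Nat.succ_pos r)⟩
  have hck : ∀ k, k ≤ r → c k ≤ cmax := fun k hk =>
    Finset.single_le_sum (fun i _ => (hcpos i).le) (Finset.mem_range.mpr (Nat.lt_succ_of_le hk))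
  refine ⟨(cmax + 2) * 3 ^ r, by positivity, ?_⟩
  intro E _ _ φ hφ M Cα hM hHol
  set S := Icc (-1 : ℝ) 1 with hS_def
  have hS' : UniqueDiffOn ℝ S := uniqueDiffOn_Icc (by norm_num)
  have hm1 : (-1 : ℝ) ∈ S := ⟨le_rfl, by norm_num⟩
  have hp1 : (1 : ℝ) ∈ S := ⟨by norm_num, le_rfl⟩
  have hM0 : 0 ≤ M := le_trans (norm_nonneg _) (hM (-1) hm1)
  have h2α : (0 : ℝ) < (2 : ℝ) ^ α := Real.rpow_pos_of_pos two_pos α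
  have hCα0 : 0 ≤ Cα := by
    have hx : (0 : ℝ) ≤ Cα * 2 ^ α := by
      have := hHol (-1) hm1 1 hp1
      have h2 : |(-1 : ℝ) - 1| = 2 := by norm_num
      rw [h2] at this
      exact le_trans (norm_nonneg _) this
    rw [mul_comm] at hx
    exact nonneg_of_mul_nonneg_right hx h2α
  set F := fun j => iteratedDerivWithin j φ S with hF_def
  -- pointwise bound via a dual functional and the scalar lemma
  have main : ∀ i, i ≤ r → ∀ x ∈ S, ‖F (r - i) x‖ ≤ (cmax + 2) * 3 ^ i * (M + Cα) := by
    intro i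
    induction i with
    | zero =>
      intro _ x hx
      simp only [Nat.sub_zero]
      by_cases hzero : F r x = 0
      · rw [hzero, norm_zero]; positivity
      obtain ⟨ℓ, hℓ1, hℓ2⟩ := exists_dual_vector ℝ _ (norm_ne_zero_iff.mpr hzero)
      set g : ℝ → ℝ := fun t => ℓ (φ t) with hg_def
      have hgC : ContDiffOn ℝ r g S := hφ.continuousLinearMap_comp ℓ
      have hgM : ∀ t ∈ S, |g t| ≤ M := by
        intro t ht
        have h1 : ‖ℓ (φ t)‖ ≤ ‖ℓ‖ * ‖φ t‖ := ℓ.le_opNorm (φ t)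
        rw [hℓ1, one_mul] at h1
        exact le_trans (by simpa [Real.norm_eq_abs] using h1) (hM t ht)
      obtain ⟨ξ, hξ, hbound⟩ := hc r g hgC (-1) 1 le_rfl le_rfl (by norm_num) M hgM
      have hξS : ξ ∈ S := hξ
      have hid : ∀ j, j ≤ r → ∀ y ∈ S, iteratedDerivWithin j g S y = ℓ (F j y) :=
        fun j hj y hy => clm_comp_iteratedDerivWithin ℓ hφ hy hj
      have hb' : |iteratedDerivWithin r g S ξ| ≤ cmax * M := by
        refine le_trans hbound ?_
        have h2 : ((1:ℝ) - -1) = 2 := by norm_num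
        rw [h2]
        have h1 : (1:ℝ) ≤ (2:ℝ) ^ r := one_le_pow₀ (by norm_num)
        exact mul_le_mul_of_nonneg_right
          (le_trans (div_le_self (hcpos r).le h1) (hck r le_rfl)) hM0
      have hdiffbd : |iteratedDerivWithin r g S x - iteratedDerivWithin r g S ξ| ≤ 2 * Cα := by
        rw [hid r le_rfl x hx, hid r le_rfl ξ hξS, ← map_sub]
        have h1 := ℓ.le_opNorm (F r x - F r ξ)
        rw [hℓ1, one_mul] at h1
        have h2 : ‖F r x - F r ξ‖ ≤ Cα * |x - ξ| ^ α := hHol x hx ξ hξS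
        have h3 : |x - ξ| ^ α ≤ (2:ℝ) ^ α := by
          apply Real.rpow_le_rpow (abs_nonneg _) _ hα0.le
          rw [abs_le]
          constructor <;> [linarith [hx.1, hξS.2]; linarith [hx.2, hξS.1]]
        have h4 : (2:ℝ) ^ α ≤ 2 := by
          calc (2:ℝ) ^ α ≤ (2:ℝ) ^ (1:ℝ) := Real.rpow_le_rpow_of_exponent_le one_le_two hα1
            _ = 2 := Real.rpow_one 2
        calc |ℓ (F r x - F r ξ)| = ‖ℓ (F r x - F r ξ)‖ := (Real.norm_eq_abs _).symm
          _ ≤ Cα * |x - ξ| ^ α := le_trans h1 h2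
          _ ≤ Cα * 2 := by nlinarith [Real.rpow_nonneg (abs_nonneg (x - ξ)) α]
          _ = 2 * Cα := by ring
      have hfin : ‖F r x‖ ≤ cmax * M + 2 * Cα := by
        calc ‖F r x‖ = ℓ (F r x) := hℓ2.symm
          _ = iteratedDerivWithin r g S x := (hid r le_rfl x hx).symm
          _ ≤ |iteratedDerivWithin r g S x| := le_abs_self _
          _ = |iteratedDerivWithin r g S ξ
                + (iteratedDerivWithin r g S x - iteratedDerivWithin r g S ξ)| := by ring_nf
          _ ≤ |iteratedDerivWithin r g S ξ|
                + |iteratedDerivWithin r g S x - iteratedDerivWithin r g S ξ| := abs_add_le _ _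
          _ ≤ cmax * M + 2 * Cα := add_le_add hb' hdiffbd
      refine le_trans hfin ?_
      nlinarith [hM0, hCα0, hcmax_pos]
    | succ i ih =>
      intro hi x hx
      have hk1 : r - (i + 1) + 1 = r - i := by omega
      set k := r - (i + 1) with hk_def
      have hkr : k < r := by omega
      have IH : ∀ y ∈ S, ‖F (k + 1) y‖ ≤ (cmax + 2) * 3 ^ i * (M + Cα) := by
        intro y hy
        have h := ih (by omega) y hy
        rwa [← hk1] at h
      by_cases hzero : F k x = 0
      · rw [hzero, norm_zero]; positivity
      obtain ⟨ℓ, hℓ1, hℓ2⟩ := exists_dual_vector ℝ _ (norm_ne_zero_iff.mpr hzero)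
      set g : ℝ → ℝ := fun t => ℓ (φ t) with hg_def
      have hgC : ContDiffOn ℝ r g S := hφ.continuousLinearMap_comp ℓ
      have hgCk : ContDiffOn ℝ k g S := hgC.of_le (by exact_mod_cast hkr.le)
      have hgM : ∀ t ∈ S, |g t| ≤ M := by
        intro t ht
        have h1 : ‖ℓ (φ t)‖ ≤ ‖ℓ‖ * ‖φ t‖ := ℓ.le_opNorm (φ t)
        rw [hℓ1, one_mul] at h1
        exact le_trans (by simpa [Real.norm_eq_abs] using h1) (hM t ht)
      obtain ⟨ξ, hξ, hbound⟩ := hc k g hgCk (-1) 1 le_rfl le_rfl (by norm_num) M hgM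
      have hξS : ξ ∈ S := hξ
      have hid : ∀ j, j ≤ r → ∀ y ∈ S, iteratedDerivWithin j g S y = ℓ (F j y) :=
        fun j hj y hy => clm_comp_iteratedDerivWithin ℓ hφ hy hj
      have hb' : |iteratedDerivWithin k g S ξ| ≤ cmax * M := by
        refine le_trans hbound ?_
        have h2 : ((1:ℝ) - -1) = 2 := by norm_num
        rw [h2]
        have h1 : (1:ℝ) ≤ (2:ℝ) ^ k := one_le_pow₀ (by norm_num)
        exact mul_le_mul_of_nonneg_right
          (le_trans (div_le_self (hcpos k).le h1) (hck k hkr.le)) hM0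
      have hdiffg : DifferentiableOn ℝ (iteratedDerivWithin k g S) S :=
        hgC.differentiableOn_iteratedDerivWithin (by exact_mod_cast hkr) hS'
      have hBd : ∀ y ∈ S, ‖derivWithin (iteratedDerivWithin k g S) S y‖
          ≤ (cmax + 2) * 3 ^ i * (M + Cα) := by
        intro y hy
        rw [← iteratedDerivWithin_succ, hid (k + 1) (by omega) y hy]
        have h1 := ℓ.le_opNorm (F (k + 1) y)
        rw [hℓ1, one_mul] at h1
        exact le_trans h1 (IH y hy)
      have hmv := Convex.norm_image_sub_le_of_norm_derivWithin_le hdiffg hBd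
        (convex_Icc _ _) hξS hx
      have hxξ : ‖x - ξ‖ ≤ 2 := by
        rw [Real.norm_eq_abs, abs_le]
        constructor <;> [linarith [hx.1, hξS.2]; linarith [hx.2, hξS.1]]
      have hB0 : (0:ℝ) ≤ (cmax + 2) * 3 ^ i * (M + Cα) := by positivity
      have hdiffbd : |iteratedDerivWithin k g S x - iteratedDerivWithin k g S ξ|
          ≤ 2 * ((cmax + 2) * 3 ^ i * (M + Cα)) := by
        rw [← Real.norm_eq_abs]
        refine le_trans hmv ?_
        nlinarith [hB0, hxξ, norm_nonneg (x - ξ)]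
      have hfin : ‖F k x‖ ≤ cmax * M + 2 * ((cmax + 2) * 3 ^ i * (M + Cα)) := by
        calc ‖F k x‖ = ℓ (F k x) := hℓ2.symm
          _ = iteratedDerivWithin k g S x := (hid k hkr.le x hx).symm
          _ ≤ |iteratedDerivWithin k g S x| := le_abs_self _
          _ = |iteratedDerivWithin k g S ξ
                + (iteratedDerivWithin k g S x - iteratedDerivWithin k g S ξ)| := by ring_nf
          _ ≤ |iteratedDerivWithin k g S ξ|
                + |iteratedDerivWithin k g S x - iteratedDerivWithin k g S ξ| := abs_add_le _ _
          _ ≤ cmax * M + 2 * ((cmax + 2) * 3 ^ i * (M + Cα)) := add_le_add hb' hdiffbd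
      refine le_trans hfin ?_
      rw [pow_succ]
      have h3i : (1:ℝ) ≤ 3 ^ i := one_le_pow₀ (by norm_num)
      have hkey : cmax * M ≤ (cmax + 2) * 3 ^ i * (M + Cα) := by
        have h1 : cmax * M ≤ (cmax + 2) * (M + Cα) := by nlinarith [hM0, hCα0, hcmax_pos]
        have h2 : (cmax + 2) * (M + Cα) ≤ (cmax + 2) * 3 ^ i * (M + Cα) := by
          nlinarith [mul_nonneg (mul_nonneg (by linarith [hcmax_pos] : (0:ℝ) ≤ cmax + 2)
            (by linarith : (0:ℝ) ≤ M + Cα)) (by linarith : (0:ℝ) ≤ 3 ^ i - 1)]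
        linarith
      linarith [hkey]
  intro k hk x hx
  have hik : r - (r - k) = k := by omega
  have := main (r - k) (Nat.sub_le r k) x hx
  rw [hik] at this
  refine le_trans this ?_
  have h3 : (3 : ℝ) ^ (r - k) ≤ 3 ^ r := pow_le_pow_right₀ (by norm_num) (Nat.sub_le r k)
  have hMC : 0 ≤ M + Cα := by linarith
  exact mul_le_mul_of_nonneg_right (mul_le_mul_of_nonneg_left h3 (by linarith)) hMC
end

section
/- Let f be a C¹ diffeomorphism of a compact 3-manifold M. Suppose μ_n are f-invariant measures decomposed as μ_n = β_n μ_n¹ + γ_n μ_n² + (1−β_n−γ_n) μ_n⁰ with β_n, γ_n, β_n+γ_n ∈ [0,1], and assume β_n → β, γ_n → γ, μ_n^i → μ^i (i = 0,1,2) weakly, μ_n → μ, and λ⁺_Σ(μ_n,f) → λ⁺_Σ(μ,f). If β > 0, then lim_n λ⁺_Σ(μ_n¹,f) = λ⁺_Σ(μ¹,f); if γ > 0, then lim_n λ⁺_Σ(μ_n²,f) = λ⁺_Σ(μ²,f). -/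
open MeasureTheory Filter Topology
open scoped NNReal BoundedContinuousFunction

/-!
By affinity, `λ⁺_Σ(μₙ) = βₙ λ⁺_Σ(μₙ¹) + γₙ λ⁺_Σ(μₙ²) + δₙ λ⁺_Σ(μₙ⁰)` with `δₙ = 1 - βₙ - γₙ`.
The `μₙ` also converge weakly to `β μ¹ + γ μ² + δ μ⁰`, which is therefore inseparable from `μ`
(the weak topology need not be Hausdorff), and an upper semi-continuous function agrees on
inseparable points; so the sum converges to `β λ⁺_Σ(μ¹) + γ λ⁺_Σ(μ²) + δ λ⁺_Σ(μ⁰)`. By upper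
semi-continuity each of its three terms is asymptotically at most its share of this limit, hence
each term converges to its share, and dividing by `βₙ → β > 0` (resp. `γₙ → γ > 0`) concludes.
-/

section UpperBounds

variable {ι : Type*} {l : Filter ι}

theorem eventually_mul_lt_of_eventually_lt {p a : ι → ℝ} {P A : ℝ}
    (hp : Tendsto p l (𝓝 P)) (hp0 : ∀ i, 0 ≤ p i) (ha : ∀ x > A, ∀ᶠ i in l, a i < x) :
    ∀ y > P * A, ∀ᶠ i in l, p i * a i < y := by
  intro y hy
  obtain ⟨x, hPx, hAx⟩ : ∃ x, P * x < y ∧ A < x :=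
    ((((continuous_const_mul P).tendsto A).eventually (gt_mem_nhds hy)).filter_mono
      (nhdsWithin_le_nhds (s := Set.Ioi A)) |>.and self_mem_nhdsWithin).exists
  filter_upwards [ha x hAx, (hp.mul_const x).eventually (gt_mem_nhds hPx)] with i hax hpx
  exact (mul_le_mul_of_nonneg_left hax.le (hp0 i)).trans_lt hpx

theorem eventually_add_lt_of_eventually_lt {u v : ι → ℝ} {U V : ℝ}
    (hu : ∀ x > U, ∀ᶠ i in l, u i < x) (hv : ∀ x > V, ∀ᶠ i in l, v i < x) :
    ∀ z > U + V, ∀ᶠ i in l, u i + v i < z := by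
  intro z hz
  filter_upwards [hu (U + (z - (U + V)) / 2) (by linarith),
    hv (V + (z - (U + V)) / 2) (by linarith)] with i hui hvi
  linarith

theorem tendsto_of_tendsto_add_of_eventually_lt {u v : ι → ℝ} {U V : ℝ}
    (hs : Tendsto (fun i => u i + v i) l (𝓝 (U + V)))
    (hu : ∀ x > U, ∀ᶠ i in l, u i < x) (hv : ∀ x > V, ∀ᶠ i in l, v i < x) :
    Tendsto u l (𝓝 U) := by
  refine tendsto_order.2 ⟨fun x hx => ?_, hu⟩
  filter_upwards [hs.eventually (lt_mem_nhds (show U + V - (U - x) / 2 < U + V by linarith)),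
    hv (V + (U - x) / 2) (by linarith)] with i hsi hvi
  linarith

theorem tendsto_of_tendsto_weighted_sum {p q r a b c : ι → ℝ} {P Q R A B C : ℝ}
    (hp : Tendsto p l (𝓝 P)) (hq : Tendsto q l (𝓝 Q)) (hr : Tendsto r l (𝓝 R))
    (hp0 : ∀ i, 0 ≤ p i) (hq0 : ∀ i, 0 ≤ q i) (hr0 : ∀ i, 0 ≤ r i)
    (ha : ∀ x > A, ∀ᶠ i in l, a i < x) (hb : ∀ x > B, ∀ᶠ i in l, b i < x)
    (hc : ∀ x > C, ∀ᶠ i in l, c i < x)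
    (hS : Tendsto (fun i => p i * a i + q i * b i + r i * c i) l (𝓝 (P * A + Q * B + R * C)))
    (hP : 0 < P) :
    Tendsto a l (𝓝 A) := by
  have hpa : Tendsto (fun i => p i * a i) l (𝓝 (P * A)) := by
    refine tendsto_of_tendsto_add_of_eventually_lt (by simpa only [add_assoc] using hS)
      (eventually_mul_lt_of_eventually_lt hp hp0 ha) ?_
    exact eventually_add_lt_of_eventually_lt (eventually_mul_lt_of_eventually_lt hq hq0 hb)
      (eventually_mul_lt_of_eventually_lt hr hr0 hc)
  have hquot := hpa.div hp hP.ne'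
  rw [mul_div_cancel_left₀ A hP.ne'] at hquot
  exact hquot.congr' ((hp.eventually_ne hP.ne').mono fun i hi => mul_div_cancel_left₀ _ hi)

end UpperBounds

section SequentiallyUpperSemicontinuous

variable {Y : Type*} [TopologicalSpace Y] {F : Y → ℝ}

theorem eq_of_inseparable_of_limsup_le
    (hF : ∀ (ys : ℕ → Y) (y : Y), Tendsto ys atTop (𝓝 y) → limsup (fun n => F (ys n)) atTop ≤ F y)
    {x y : Y} (hxy : Inseparable x y) : F x = F y := by
  have key : ∀ {x y : Y}, Inseparable x y → F x ≤ F y := fun {x y} h => by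
    simpa only [limsup_const] using hF (fun _ => x) y (h.nhds_eq ▸ tendsto_const_nhds)
  exact le_antisymm (key hxy) (key hxy.symm)

theorem eventually_lt_of_limsup_le
    (hF : ∀ (ys : ℕ → Y) (y : Y), Tendsto ys atTop (𝓝 y) → limsup (fun n => F (ys n)) atTop ≤ F y)
    (hbdd : BddAbove (Set.range F)) {ys : ℕ → Y} {y : Y} (hy : Tendsto ys atTop (𝓝 y)) :
    ∀ x > F y, ∀ᶠ n in atTop, F (ys n) < x := by
  obtain ⟨B, hB⟩ := hbdd
  exact fun x hx => eventually_lt_of_limsup_lt ((hF ys y hy).trans_lt hx)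
    (isBoundedUnder_of ⟨B, fun n => hB (Set.mem_range_self _)⟩)

end SequentiallyUpperSemicontinuous

section Mixtures

variable {X : Type*} [MeasurableSpace X]

theorem ProbabilityMeasure.exists_coe_eq_smul_add_smul_add_smul (b c : ℝ≥0) (hbc : b + c ≤ 1)
    (ν₁ ν₂ ν₀ : ProbabilityMeasure X) :
    ∃ ν : ProbabilityMeasure X,
      (ν : Measure X) = b • (ν₁ : Measure X) + c • (ν₂ : Measure X)
        + (1 - b - c) • (ν₀ : Measure X) := by
  refine ⟨⟨_, ⟨?_⟩⟩, rfl⟩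
  have hsum : b + c + (1 - b - c) = 1 := by rw [tsub_tsub]; exact add_tsub_cancel_of_le hbc
  simp only [Measure.add_apply, Measure.coe_nnreal_smul_apply, measure_univ, mul_one]
  rw [← ENNReal.coe_add, ← ENNReal.coe_add, hsum, ENNReal.coe_one]

variable [TopologicalSpace X] [OpensMeasurableSpace X]

theorem integral_smul_add_smul_add_smul (g : X →ᵇ ℝ) (b c d : ℝ≥0)
    (m₁ m₂ m₀ : Measure X) [IsFiniteMeasure m₁] [IsFiniteMeasure m₂] [IsFiniteMeasure m₀] :
    ∫ x, g x ∂(b • m₁ + c • m₂ + d • m₀)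
      = b * ∫ x, g x ∂m₁ + c * ∫ x, g x ∂m₂ + d * ∫ x, g x ∂m₀ := by
  rw [integral_add_measure, integral_add_measure, integral_smul_nnreal_measure,
    integral_smul_nnreal_measure, integral_smul_nnreal_measure]
  · simp only [NNReal.smul_def, smul_eq_mul]
  all_goals exact g.integrable _

theorem ProbabilityMeasure.tendsto_of_coe_eq_smul_add_smul_add_smul {ι : Type*} {l : Filter ι}
    {b c : ι → ℝ≥0} {β γ : ℝ≥0} (hb : Tendsto b l (𝓝 β)) (hc : Tendsto c l (𝓝 γ))
    {ρ ρ₁ ρ₂ ρ₀ : ι → ProbabilityMeasure X} {ν ν₁ ν₂ ν₀ : ProbabilityMeasure X}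
    (h₁ : Tendsto ρ₁ l (𝓝 ν₁)) (h₂ : Tendsto ρ₂ l (𝓝 ν₂)) (h₀ : Tendsto ρ₀ l (𝓝 ν₀))
    (hρ : ∀ i, (ρ i : Measure X) = b i • (ρ₁ i : Measure X) + c i • (ρ₂ i : Measure X)
        + (1 - b i - c i) • (ρ₀ i : Measure X))
    (hν : (ν : Measure X) = β • (ν₁ : Measure X) + γ • (ν₂ : Measure X)
        + (1 - β - γ) • (ν₀ : Measure X)) :
    Tendsto ρ l (𝓝 ν) := by
  rw [ProbabilityMeasure.tendsto_iff_forall_integral_tendsto] at h₁ h₂ h₀ ⊢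
  intro g
  simp only [hρ, hν, integral_smul_add_smul_add_smul]
  have hd : Tendsto (fun i => 1 - b i - c i) l (𝓝 (1 - β - γ)) :=
    (tendsto_const_nhds.sub hb).sub hc
  exact (((NNReal.tendsto_coe.2 hb).mul (h₁ g)).add ((NNReal.tendsto_coe.2 hc).mul (h₂ g))).add
    ((NNReal.tendsto_coe.2 hd).mul (h₀ g))

end Mixtures

theorem decomposition_continuity_lyapunov_general
    {X : Type*} [MeasurableSpace X] [TopologicalSpace X] [BorelSpace X]
    (lamSig : ProbabilityMeasure X → ℝ)
    (haffine : ∀ (b c : ℝ≥0), b + c ≤ 1 →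
      ∀ (ν ν1 ν2 ν0 : ProbabilityMeasure X),
        (ν : Measure X) = b • (ν1 : Measure X) + c • (ν2 : Measure X)
            + (1 - b - c) • (ν0 : Measure X) →
        lamSig ν = (b : ℝ) * lamSig ν1 + (c : ℝ) * lamSig ν2
            + ((1 - b - c : ℝ≥0) : ℝ) * lamSig ν0)
    (husc : ∀ (νs : ℕ → ProbabilityMeasure X) (ν : ProbabilityMeasure X),
      Tendsto νs atTop (𝓝 ν) → limsup (fun n => lamSig (νs n)) atTop ≤ lamSig ν)
    (hbdd : ∃ B : ℝ, ∀ ν, |lamSig ν| ≤ B)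
    (βn γn : ℕ → ℝ≥0) (β γ : ℝ≥0) (hβγn : ∀ n, βn n + γn n ≤ 1) (hβγ : β + γ ≤ 1)
    (μn μn1 μn2 μn0 : ℕ → ProbabilityMeasure X)
    (μ μ1 μ2 μ0 : ProbabilityMeasure X)
    (hdecomp : ∀ n, (μn n : Measure X)
      = (βn n) • (μn1 n : Measure X) + (γn n) • (μn2 n : Measure X)
        + (1 - βn n - γn n) • (μn0 n : Measure X))
    (hβconv : Tendsto (fun n => ((βn n : ℝ))) atTop (𝓝 (β : ℝ)))
    (hγconv : Tendsto (fun n => ((γn n : ℝ))) atTop (𝓝 (γ : ℝ)))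
    (hμn : Tendsto μn atTop (𝓝 μ))
    (hμn1 : Tendsto μn1 atTop (𝓝 μ1))
    (hμn2 : Tendsto μn2 atTop (𝓝 μ2))
    (hμn0 : Tendsto μn0 atTop (𝓝 μ0))
    (hlam : Tendsto (fun n => lamSig (μn n)) atTop (𝓝 (lamSig μ))) :
    ((0 : ℝ) < β → Tendsto (fun n => lamSig (μn1 n)) atTop (𝓝 (lamSig μ1))) ∧
    ((0 : ℝ) < γ → Tendsto (fun n => lamSig (μn2 n)) atTop (𝓝 (lamSig μ2))) := by
  obtain ⟨B, hB⟩ := hbdd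
  have hbddAbove : BddAbove (Set.range lamSig) :=
    ⟨B, Set.forall_mem_range.2 fun ν => (abs_le.1 (hB ν)).2⟩
  have hβ := NNReal.tendsto_coe.1 hβconv
  have hγ := NNReal.tendsto_coe.1 hγconv
  have hδ : Tendsto (fun n => ((1 - βn n - γn n : ℝ≥0) : ℝ)) atTop (𝓝 ((1 - β - γ : ℝ≥0) : ℝ)) :=
    NNReal.tendsto_coe.2 ((tendsto_const_nhds.sub hβ).sub hγ)
  obtain ⟨ν, hν⟩ := ProbabilityMeasure.exists_coe_eq_smul_add_smul_add_smul β γ hβγ μ1 μ2 μ0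
  have hμν : lamSig μ = lamSig ν := eq_of_inseparable_of_limsup_le husc <|
    tendsto_nhds_unique_inseparable hμn <|
      ProbabilityMeasure.tendsto_of_coe_eq_smul_add_smul_add_smul hβ hγ hμn1 hμn2 hμn0 hdecomp hν
  have hS := hlam.congr fun n => haffine _ _ (hβγn n) _ _ _ _ (hdecomp n)
  rw [hμν, haffine β γ hβγ ν μ1 μ2 μ0 hν] at hS
  have hupper := fun {ρs ρ} (h : Tendsto ρs atTop (𝓝 ρ)) =>
    eventually_lt_of_limsup_le husc hbddAbove h
  refine ⟨tendsto_of_tendsto_weighted_sum hβconv hγconv hδ (fun n => (βn n).coe_nonneg)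
      (fun n => (γn n).coe_nonneg) (fun n => NNReal.coe_nonneg _) (hupper hμn1) (hupper hμn2)
      (hupper hμn0) hS, ?_⟩
  refine tendsto_of_tendsto_weighted_sum hγconv hβconv hδ (fun n => (γn n).coe_nonneg)
    (fun n => (βn n).coe_nonneg) (fun n => NNReal.coe_nonneg _) (hupper hμn2) (hupper hμn1)
    (hupper hμn0) ?_
  simpa only [add_comm ((βn _ : ℝ) * _), add_comm ((β : ℝ) * _)] using hS

/-- Continuity of the sum of positive Lyapunov exponents along the pieces of a
decomposition.  `lamSig` denotes `ν ↦ λ⁺_Σ(ν,f)`, which is affine and upper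
semi-continuous on invariant probability measures of the `C¹` diffeomorphism `f`
of a compact 3-manifold.  If `μ_n = β_n μ_n¹ + γ_n μ_n² + (1−β_n−γ_n) μ_n⁰` with
`β_n → β`, `γ_n → γ`, `μ_n^i → μ^i`, `μ_n → μ`, and `λ⁺_Σ(μ_n,f) → λ⁺_Σ(μ,f)`,
then `β > 0` implies `λ⁺_Σ(μ_n¹,f) → λ⁺_Σ(μ¹,f)` and `γ > 0` implies
`λ⁺_Σ(μ_n²,f) → λ⁺_Σ(μ²,f)`. -/
theorem decomposition_continuity_lyapunov
    {X : Type*} [MeasurableSpace X] [TopologicalSpace X] [BorelSpace X]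
    (f : X → X)
    (lamSig : ProbabilityMeasure X → ℝ)
    (haffine : ∀ (b c : ℝ≥0), b + c ≤ 1 →
      ∀ (ν ν1 ν2 ν0 : ProbabilityMeasure X),
        (ν : Measure X) = b • (ν1 : Measure X) + c • (ν2 : Measure X)
            + (1 - b - c) • (ν0 : Measure X) →
        lamSig ν = (b : ℝ) * lamSig ν1 + (c : ℝ) * lamSig ν2
            + ((1 - b - c : ℝ≥0) : ℝ) * lamSig ν0)
    (husc : ∀ (νs : ℕ → ProbabilityMeasure X) (ν : ProbabilityMeasure X),
      Tendsto νs atTop (𝓝 ν) → limsup (fun n => lamSig (νs n)) atTop ≤ lamSig ν)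
    (hbdd : ∃ B : ℝ, ∀ ν, |lamSig ν| ≤ B)
    (βn γn : ℕ → ℝ≥0) (β γ : ℝ≥0) (hβγn : ∀ n, βn n + γn n ≤ 1) (hβγ : β + γ ≤ 1)
    (μn μn1 μn2 μn0 : ℕ → ProbabilityMeasure X)
    (μ μ1 μ2 μ0 : ProbabilityMeasure X)
    (hinv : ∀ n, MeasurePreserving f (μn n : Measure X) (μn n : Measure X))
    (hdecomp : ∀ n, (μn n : Measure X)
      = (βn n) • (μn1 n : Measure X) + (γn n) • (μn2 n : Measure X)
        + (1 - βn n - γn n) • (μn0 n : Measure X))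
    (hβconv : Tendsto (fun n => ((βn n : ℝ))) atTop (𝓝 (β : ℝ)))
    (hγconv : Tendsto (fun n => ((γn n : ℝ))) atTop (𝓝 (γ : ℝ)))
    (hμn : Tendsto μn atTop (𝓝 μ))
    (hμn1 : Tendsto μn1 atTop (𝓝 μ1))
    (hμn2 : Tendsto μn2 atTop (𝓝 μ2))
    (hμn0 : Tendsto μn0 atTop (𝓝 μ0))
    (hlam : Tendsto (fun n => lamSig (μn n)) atTop (𝓝 (lamSig μ))) :
    ((0 : ℝ) < β → Tendsto (fun n => lamSig (μn1 n)) atTop (𝓝 (lamSig μ1))) ∧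
    ((0 : ℝ) < γ → Tendsto (fun n => lamSig (μn2 n)) atTop (𝓝 (lamSig μ2))) :=
  decomposition_continuity_lyapunov_general lamSig haffine husc hbdd βn γn β γ hβγn hβγ μn μn1 μn2
    μn0 μ μ1 μ2 μ0 hdecomp hβconv hγconv hμn hμn1 hμn2 hμn0 hlam
end
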